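/- Two k-sets A, B ⊆ [n] (with 2k ≤ n) are strongly intersecting if and only if there exist indices 1 ≤ i, j ≤ k such that i + j > max{a_i, b_j}, where A = {a_1 < ... < a_k}, B = {b_1 < ... < b_k}. -/

import Mathlib

open Finset

/-- 1-indexed i-th smallest element of a finset of naturals (0 if out of range). -/
def nth (A : Finset ℕ) (i : ℕ) : ℕ := (A.sort (· ≤ ·)).getD (i - 1) 0

/-- Elementwise order on finsets of equal size: `A ≤ B`. -/
def eLE (A B : Finset ℕ) : Prop :=
  A.card = B.card ∧ ∀ i, 1 ≤ i → i ≤ B.card → nth A i ≤ nth B i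

/-- `A ⪯ B`: `|A| ≥ |B|` and the i-th smallest of `A` is ≤ the i-th smallest of `B` for `i ≤ |B|`. -/
def preceq (A B : Finset ℕ) : Prop :=
  B.card ≤ A.card ∧ ∀ i, 1 ≤ i → i ≤ B.card → nth A i ≤ nth B i

/-- `μ_X(l) = |X ∩ [l]|`. -/
def mu (X : Finset ℕ) (l : ℕ) : ℕ := (X ∩ Finset.Icc 1 l).card

/-- `G ∼_si H` (within `[n]`): every `G' ≤ G` and `H' ≤ H` with `G', H' ⊆ [n]` intersect. -/
def sInt (n : ℕ) (G H : Finset ℕ) : Prop :=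
  ∀ G' H' : Finset ℕ, G' ⊆ Finset.Icc 1 n → H' ⊆ Finset.Icc 1 n →
    eLE G' G → eLE H' H → (G' ∩ H').Nonempty

/-- `F(n,k,𝒢)`: the k-subsets `S` of `[n]` with `S ⪯ G` for some `G ∈ 𝒢`. -/
def Fam (n k : ℕ) (𝒢 : Set (Finset ℕ)) : Set (Finset ℕ) :=
  {S | S ⊆ Finset.Icc 1 n ∧ S.card = k ∧ ∃ G ∈ 𝒢, preceq S G}

/-- A family is intersecting if every two members (possibly equal) intersect. -/
def IsIntersecting (𝒜 : Set (Finset ℕ)) : Prop :=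
  ∀ A ∈ 𝒜, ∀ B ∈ 𝒜, (A ∩ B).Nonempty

/-- The type of `G`: the largest `r` with `g_r < k + r`. -/
def typeOf (k : ℕ) (G : Finset ℕ) : ℕ :=
  ((Finset.range (G.card + 1)).filter fun r => 1 ≤ r ∧ nth G r < k + r).sup id

/-- `π(G) = {g_1, …, g_r}` where `r` is the type of `G`. -/
def piG (k : ℕ) (G : Finset ℕ) : Finset ℕ :=
  ((G.sort (· ≤ ·)).take (typeOf k G)).toFinset

/-!
For a set `X` of positive integers, `μ_X(l) = |X ∩ [l]|` satisfies `x_i ≤ l ↔ i ≤ μ_X(l)`.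
If `a_i, b_j ≤ i + j - 1`, then any `A' ≤ A` and `B' ≤ B` have at least `i` and `j` elements
in `[i + j - 1]`, so they meet. Otherwise `μ_A(l) + μ_B(l) ≤ l` for every `l`, and replacing
every element of `A` and of `B` by its position in the sorted merge of `A` and `B` moves no
element up and produces disjoint sets `A' ≤ A` and `B' ≤ B`.
-/

lemma nth_eq_nat_nth (A : Finset ℕ) (i : ℕ) : nth A i = Nat.nth (· ∈ A) (i - 1) := by
  rw [Nat.nth_eq_getD_sort (p := (· ∈ A)) A.finite_toSet, A.finite_toSet_toFinset]
  rfl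

lemma nth_mem {A : Finset ℕ} {i : ℕ} (hi : 1 ≤ i) (hiA : i ≤ #A) : nth A i ∈ A := by
  rw [nth_eq_nat_nth]
  exact Nat.nth_mem_of_lt_card (p := (· ∈ A)) A.finite_toSet
    (by rw [A.finite_toSet_toFinset]; omega)

lemma nth_pos {A : Finset ℕ} (h0 : 0 ∉ A) {i : ℕ} (hi : 1 ≤ i) (hiA : i ≤ #A) : 0 < nth A i :=
  Nat.pos_of_ne_zero fun h => h0 (h ▸ nth_mem hi hiA)

lemma nth_le_nth {A : Finset ℕ} {i j : ℕ} (hi : 1 ≤ i) (hij : i ≤ j) (hjA : j ≤ #A) :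
    nth A i ≤ nth A j := by
  rw [nth_eq_nat_nth, nth_eq_nat_nth]
  exact Nat.nth_le_nth_of_lt_card (p := (· ∈ A)) A.finite_toSet (by omega)
    (by rw [A.finite_toSet_toFinset]; omega)

lemma nth_eq_orderEmbOfFin {A : Finset ℕ} {k i : ℕ} (h : #A = k) (hi : 1 ≤ i) (hik : i ≤ k) :
    nth A i = A.orderEmbOfFin h ⟨i - 1, by omega⟩ := by
  rw [orderEmbOfFin_apply, nth, List.getD_eq_getElem _ _ (by rw [length_sort]; omega)]
  rfl

lemma nth_image_Icc {k : ℕ} {f : ℕ → ℕ} (hf : StrictMonoOn f (Set.Icc 1 k)) {i : ℕ}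
    (hi : 1 ≤ i) (hik : i ≤ k) : nth ((Icc 1 k).image f) i = f i := by
  have hcard : #((Icc 1 k).image f) = k := by
    rw [card_image_of_injOn (by simpa using hf.injOn), Nat.card_Icc, Nat.add_sub_cancel]
  have hemb := orderEmbOfFin_unique hcard (f := fun x => f (x + 1))
    (fun x => mem_image_of_mem f (by simp))
    (fun x y hxy => hf (by simp) (by simp) (by simpa using hxy))
  rw [nth_eq_orderEmbOfFin hcard hi hik, ← hemb]
  simp only
  congr 1
  omega

lemma eLE_image_Icc {A : Finset ℕ} {f : ℕ → ℕ} (hf : StrictMonoOn f (Set.Icc 1 #A))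
    (hle : ∀ i, 1 ≤ i → i ≤ #A → f i ≤ nth A i) : eLE ((Icc 1 #A).image f) A := by
  refine ⟨?_, fun i hi hiA => (nth_image_Icc hf hi hiA).trans_le (hle i hi hiA)⟩
  rw [card_image_of_injOn (by simpa using hf.injOn), Nat.card_Icc, Nat.add_sub_cancel]

lemma mu_mono (A : Finset ℕ) : Monotone (mu A) := fun _ _ h =>
  card_le_card (inter_subset_inter_left (Icc_subset_Icc_right h))

lemma mu_le (A : Finset ℕ) (l : ℕ) : mu A l ≤ l :=
  (card_le_card inter_subset_right).trans (Nat.card_Icc 1 l).le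

lemma mu_le_card (A : Finset ℕ) (l : ℕ) : mu A l ≤ #A :=
  card_le_card inter_subset_left

lemma mu_eq_count {A : Finset ℕ} (h0 : 0 ∉ A) (l : ℕ) :
    mu A l = Nat.count (· ∈ A) (l + 1) := by
  rw [mu, Nat.count_eq_card_filter_range]
  congr 1
  ext x
  simp only [mem_inter, mem_Icc, mem_filter, mem_range]
  constructor
  · rintro ⟨hx, -, hxl⟩
    exact ⟨by omega, hx⟩
  · rintro ⟨hxl, hx⟩
    exact ⟨hx, Nat.one_le_iff_ne_zero.2 (by rintro rfl; exact h0 hx), by omega⟩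

lemma nth_le_iff_le_mu {A : Finset ℕ} (h0 : 0 ∉ A) {i l : ℕ} (hi : 1 ≤ i) (hiA : i ≤ #A) :
    nth A i ≤ l ↔ i ≤ mu A l := by
  have hcard : ∀ hf : (Set.ofPred (· ∈ A)).Finite, i - 1 < #hf.toFinset := fun _ => by
    rw [← A.finite_toSet_toFinset] at hiA
    omega
  rw [nth_eq_nat_nth, mu_eq_count h0, ← Nat.lt_add_one_iff]
  constructor
  · intro h
    calc i = Nat.count (· ∈ A) (Nat.nth (· ∈ A) (i - 1) + 1) := by
          rw [Nat.count_nth_succ hcard]; omega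
      _ ≤ Nat.count (· ∈ A) (l + 1) := Nat.count_monotone _ h
  · intro h
    exact Nat.nth_lt_of_lt_count (by omega)

lemma zero_notMem_of_subset_Icc {A : Finset ℕ} {n : ℕ} (hA : A ⊆ Icc 1 n) : 0 ∉ A :=
  fun h => by simpa using hA h

lemma sInt_of_max_nth_lt {n : ℕ} {A B : Finset ℕ} {i j : ℕ} (hi : 1 ≤ i) (hiA : i ≤ #A)
    (hj : 1 ≤ j) (hjB : j ≤ #B) (h : max (nth A i) (nth B j) < i + j) : sInt n A B := by
  intro A' B' hA' hB' hA'A hB'B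
  have hiA' : i ≤ mu A' (i + j - 1) :=
    (nth_le_iff_le_mu (zero_notMem_of_subset_Icc hA') hi (hA'A.1 ▸ hiA)).1
      ((hA'A.2 i hi hiA).trans (by omega))
  have hjB' : j ≤ mu B' (i + j - 1) :=
    (nth_le_iff_le_mu (zero_notMem_of_subset_Icc hB') hj (hB'B.1 ▸ hjB)).1
      ((hB'B.2 j hj hjB).trans (by omega))
  have hcard : #(Icc 1 (i + j - 1)) < mu A' (i + j - 1) + mu B' (i + j - 1) := by
    rw [Nat.card_Icc]; omega
  exact (inter_nonempty_of_card_lt_card_add_card inter_subset_right inter_subset_right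
    hcard).mono (inter_subset_inter inter_subset_left inter_subset_left)

lemma mu_add_mu_le {A B : Finset ℕ} (h0A : 0 ∉ A) (h0B : 0 ∉ B)
    (h : ∀ i j, 1 ≤ i → i ≤ #A → 1 ≤ j → j ≤ #B → i + j ≤ max (nth A i) (nth B j)) (l : ℕ) :
    mu A l + mu B l ≤ l := by
  by_contra! hl
  have hiA : 1 ≤ mu A l := by have := mu_le B l; omega
  have hjB : 1 ≤ mu B l := by have := mu_le A l; omega
  have ha := (nth_le_iff_le_mu h0A hiA (mu_le_card A l)).2 le_rfl
  have hb := (nth_le_iff_le_mu h0B hjB (mu_le_card B l)).2 le_rfl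
  have := h _ _ hiA (mu_le_card A l) hjB (mu_le_card B l)
  omega

/-- The position of `nth A i` in the sorted merge of `A` and `B`, where ties between equal
elements go to `A` if `s = 1` and to `B` if `s = 0`. -/
def mergeRank (A B : Finset ℕ) (s i : ℕ) : ℕ := i + mu B (nth A i - s)

lemma mergeRank_strictMonoOn (A B : Finset ℕ) (s : ℕ) :
    StrictMonoOn (mergeRank A B s) (Set.Icc 1 #A) := by
  rintro i ⟨hi, -⟩ j ⟨-, hj⟩ hij
  have := mu_mono B (Nat.sub_le_sub_right (nth_le_nth hi hij.le hj) s)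
  simp only [mergeRank]
  omega

lemma mergeRank_le_nth {A B : Finset ℕ} (h0 : 0 ∉ A) (hAB : ∀ l, mu A l + mu B l ≤ l) (s : ℕ)
    {i : ℕ} (hi : 1 ≤ i) (hiA : i ≤ #A) : mergeRank A B s i ≤ nth A i := by
  have := (nth_le_iff_le_mu h0 hi hiA).1 le_rfl
  have := mu_mono B (Nat.sub_le (nth A i) s)
  have := hAB (nth A i)
  simp only [mergeRank]
  omega

lemma image_mergeRank_subset_Icc {n : ℕ} {A B : Finset ℕ} (hA : A ⊆ Icc 1 n)
    (hAB : ∀ l, mu A l + mu B l ≤ l) (s : ℕ) : (Icc 1 #A).image (mergeRank A B s) ⊆ Icc 1 n := by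
  intro x hx
  obtain ⟨i, hi, rfl⟩ := mem_image.1 hx
  rw [mem_Icc] at hi ⊢
  have := mergeRank_le_nth (zero_notMem_of_subset_Icc hA) hAB s hi.1 hi.2
  have := (mem_Icc.1 (hA (nth_mem hi.1 hi.2))).2
  exact ⟨hi.1.trans (Nat.le_add_right _ _), by omega⟩

lemma mergeRank_ne {A B : Finset ℕ} (h0A : 0 ∉ A) (h0B : 0 ∉ B) {i j : ℕ} (hi : 1 ≤ i)
    (hiA : i ≤ #A) (hj : 1 ≤ j) (hjB : j ≤ #B) : mergeRank A B 1 i ≠ mergeRank B A 0 j := by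
  have := nth_pos h0A hi hiA
  simp only [mergeRank, Nat.sub_zero]
  rcases le_or_gt (nth A i) (nth B j) with h | h
  · have := (nth_le_iff_le_mu h0A hi hiA).1 h
    have : mu B (nth A i - 1) < j := by
      rw [← not_le, ← nth_le_iff_le_mu h0B hj hjB]; omega
    omega
  · have := (nth_le_iff_le_mu h0B hj hjB).1 (Nat.le_sub_one_of_lt h)
    have : mu A (nth B j) < i := by
      rw [← not_le, ← nth_le_iff_le_mu h0A hi hiA]; omega
    omega

lemma not_sInt_of_mu_add_mu_le {n : ℕ} {A B : Finset ℕ} (hA : A ⊆ Icc 1 n) (hB : B ⊆ Icc 1 n)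
    (hAB : ∀ l, mu A l + mu B l ≤ l) : ¬ sInt n A B := by
  have h0A := zero_notMem_of_subset_Icc hA
  have h0B := zero_notMem_of_subset_Icc hB
  have hBA : ∀ l, mu B l + mu A l ≤ l := fun l => (add_comm _ _).trans_le (hAB l)
  intro hsInt
  obtain ⟨x, hx⟩ := hsInt _ _ (image_mergeRank_subset_Icc hA hAB 1)
    (image_mergeRank_subset_Icc hB hBA 0)
    (eLE_image_Icc (mergeRank_strictMonoOn A B 1) fun i => mergeRank_le_nth h0A hAB 1)
    (eLE_image_Icc (mergeRank_strictMonoOn B A 0) fun j => mergeRank_le_nth h0B hBA 0)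
  obtain ⟨⟨i, hi, rfl⟩, ⟨j, hj, hij⟩⟩ := And.imp mem_image.1 mem_image.1 (mem_inter.1 hx)
  rw [mem_Icc] at hi hj
  exact mergeRank_ne h0A h0B hi.1 hi.2 hj.1 hj.2 hij.symm

theorem stmt16_general (n k : ℕ) (A B : Finset ℕ)
    (hA : A ⊆ Finset.Icc 1 n) (hB : B ⊆ Finset.Icc 1 n)
    (hAc : A.card = k) (hBc : B.card = k) :
    sInt n A B ↔ ∃ i j, 1 ≤ i ∧ i ≤ k ∧ 1 ≤ j ∧ j ≤ k ∧
      max (nth A i) (nth B j) < i + j := by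
  subst hAc
  constructor
  · intro hsInt
    by_contra! h
    refine not_sInt_of_mu_add_mu_le hA hB ?_ hsInt
    exact mu_add_mu_le (zero_notMem_of_subset_Icc hA) (zero_notMem_of_subset_Icc hB)
      fun i j hi hiA hj hjB => h i j hi hiA hj (hBc ▸ hjB)
  · rintro ⟨i, j, hi, hiA, hj, hjB, h⟩
    exact sInt_of_max_nth_lt hi hiA hj (hBc ▸ hjB) h

theorem stmt16 (n k : ℕ) (hn : 2 * k ≤ n) (A B : Finset ℕ)
    (hA : A ⊆ Finset.Icc 1 n) (hB : B ⊆ Finset.Icc 1 n)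
    (hAc : A.card = k) (hBc : B.card = k) :
    sInt n A B ↔ ∃ i j, 1 ≤ i ∧ i ≤ k ∧ 1 ≤ j ∧ j ≤ k ∧
      max (nth A i) (nth B j) < i + j :=
  stmt16_general n k A B hA hB hAc hBc
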